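/- arXiv:0810.1997 — 2 statements merged into one kernel-verified Lean document; each statement's English description precedes it below -/
import Mathlib

section
/- If G is a simple 1-dof Henneberg-I graph with base non-edge f = (v1, v2), then no wellconstrained (Laman) subgraph of G contains both v1 and v2. -/
open SimpleGraph

variable {α : Type*} [DecidableEq α]

/-- Validity of a Henneberg-I construction sequence (list of steps `(v, u, w)` meaning
`v ◁ (u, w)`) starting from the vertex set `S`. -/
def ValidFrom (S : Finset α) : List (α × α × α) → Prop
  | [] => True
  | (v, u, w) :: rest => v ∉ S ∧ u ∈ S ∧ w ∈ S ∧ u ≠ w ∧ ValidFrom (insert v S) rest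

/-- The vertex set built by a Henneberg-I construction from base edge `(a, b)`. -/
def buildVerts (a b : α) (l : List (α × α × α)) : Finset α :=
  l.foldl (fun s p => insert p.1 s) {a, b}

/-- The edge set built by a Henneberg-I construction from base edge `(a, b)`. -/
def buildEdges (a b : α) (l : List (α × α × α)) : Finset (Sym2 α) :=
  l.foldl (fun s p => insert s(p.1, p.2.1) (insert s(p.1, p.2.2) s)) {s(a, b)}

/-- `(V, E)` is a Henneberg-I graph with base edge `(a, b)`. -/
def IsHennebergI (V : Finset α) (E : Finset (Sym2 α)) (a b : α) : Prop :=
  a ≠ b ∧ ∃ l, ValidFrom {a, b} l ∧ V = buildVerts a b l ∧ E = buildEdges a b l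

/-- `(V, E)` is a simple 1-dof Henneberg-I graph with base non-edge `(a, b)`:
adding back the base edge `(a, b)` gives a Henneberg-I graph with base edge `(a, b)`. -/
def IsSimple1Dof (V : Finset α) (E : Finset (Sym2 α)) (a b : α) : Prop :=
  s(a, b) ∉ E ∧ IsHennebergI V (insert s(a, b) E) a b

/-- `(V', E')` is a subgraph of `(V, E)`. -/
def IsSubgraphOf (V : Finset α) (E : Finset (Sym2 α)) (V' : Finset α)
    (E' : Finset (Sym2 α)) : Prop :=
  V' ⊆ V ∧ E' ⊆ E ∧ ∀ e ∈ E', ∀ v ∈ e, v ∈ V'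

/-- `(V, E)` is wellconstrained (Laman): `|E| = 2|V| - 3` and every subgraph on `m`
vertices has at most `2m - 3` edges. -/
def IsLaman (V : Finset α) (E : Finset (Sym2 α)) : Prop :=
  E.card + 3 = 2 * V.card ∧
  ∀ V' E', IsSubgraphOf V E V' E' → E'.card ≤ 2 * V'.card - 3

/-- The degree of the vertex `x` in the edge set `E`. -/
def degreeIn (E : Finset (Sym2 α)) (x : α) : ℕ := (E.filter (fun e => x ∈ e)).card

/-- A step `p = (v, u, w)` is constructed directly on the base pair `(a, b)`. -/
def OnBase (a b : α) (p : α × α × α) : Prop :=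
  (p.2.1 = a ∧ p.2.2 = b) ∨ (p.2.1 = b ∧ p.2.2 = a)

/-- The 1-path property: exactly one vertex other than `a` and `b` has degree 2. -/
def OnePath (V : Finset α) (E : Finset (Sym2 α)) (a b : α) : Prop :=
  ∃! x, x ∈ V ∧ x ≠ a ∧ x ≠ b ∧ degreeIn E x = 2

/-- Triangle-decomposability of a graph `(V, E)`. -/
inductive TriDecomp : Finset α → Finset (Sym2 α) → Prop
  | edge (u v : α) (h : u ≠ v) : TriDecomp {u, v} {s(u, v)}
  | triangle (u v w : α) (huv : u ≠ v) (hvw : v ≠ w) (huw : u ≠ w) :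
      TriDecomp {u, v, w} {s(u, v), s(v, w), s(u, w)}
  | merge (V1 V2 V3 : Finset α) (E1 E2 E3 : Finset (Sym2 α)) (v1 v2 v3 : α)
      (h12 : v1 ≠ v2) (h23 : v2 ≠ v3) (h13 : v1 ≠ v3)
      (t1 : TriDecomp V1 E1) (t2 : TriDecomp V2 E2) (t3 : TriDecomp V3 E3)
      (i12 : V1 ∩ V2 = {v3}) (i23 : V2 ∩ V3 = {v1}) (i13 : V1 ∩ V3 = {v2})
      (e12 : E1 ∩ E2 = ∅) (e23 : E2 ∩ E3 = ∅) (e13 : E1 ∩ E3 = ∅) :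
      TriDecomp (V1 ∪ V2 ∪ V3) (E1 ∪ E2 ∪ E3)

/-- `H` is a minor of `G`: branch-set definition. -/
def HasMinor {V W : Type*} (G : SimpleGraph V) (H : SimpleGraph W) : Prop :=
  ∃ f : W → Set V,
    (∀ w, (f w).Nonempty) ∧
    (∀ w, (G.induce (f w)).Connected) ∧
    (∀ w w', w ≠ w' → Disjoint (f w) (f w')) ∧
    ∀ w w', H.Adj w w' → ∃ x ∈ f w, ∃ y ∈ f w', G.Adj x y


def Sparse (S : Finset α) (F : Finset (Sym2 α)) : Prop :=
  (∀ e ∈ F, ∀ x ∈ e, x ∈ S) ∧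
  (∀ V' E', IsSubgraphOf S F V' E' → E'.Nonempty → E'.card + 3 ≤ 2 * V'.card)

lemma sparse_step {S : Finset α} {F : Finset (Sym2 α)} {v u w : α}
    (hsp : Sparse S F) (hv : v ∉ S) (hu : u ∈ S) (hw : w ∈ S) (huw : u ≠ w) :
    Sparse (insert v S) (insert s(v, u) (insert s(v, w) F)) := by
  classical
  obtain ⟨hend, hcount⟩ := hsp
  have hvu : v ≠ u := fun h => hv (h ▸ hu)
  have hvw : v ≠ w := fun h => hv (h ▸ hw)
  constructor
  · intro e he x hx
    rcases Finset.mem_insert.1 he with rfl | he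
    · rcases Sym2.mem_iff.1 hx with rfl | rfl
      · exact Finset.mem_insert_self _ _
      · exact Finset.mem_insert_of_mem hu
    rcases Finset.mem_insert.1 he with rfl | he
    · rcases Sym2.mem_iff.1 hx with rfl | rfl
      · exact Finset.mem_insert_self _ _
      · exact Finset.mem_insert_of_mem hw
    · exact Finset.mem_insert_of_mem (hend e he x hx)
  · rintro V' E' ⟨hV', hE', hcl⟩ hne
    by_cases hvV : v ∈ V'
    · set E2 := E'.filter (fun e => v ∉ e) with hE2def
      have hE2sub : E2 ⊆ F := by
        intro e he
        have h1 := Finset.mem_filter.1 he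
        rcases Finset.mem_insert.1 (hE' h1.1) with rfl | h
        · exact absurd (Sym2.mem_mk_left v u) h1.2
        rcases Finset.mem_insert.1 h with rfl | h
        · exact absurd (Sym2.mem_mk_left v w) h1.2
        · exact h
      have hfil : E'.filter (fun e => v ∈ e) ⊆ {s(v,u), s(v,w)} := by
        intro e he
        have h1 := Finset.mem_filter.1 he
        rcases Finset.mem_insert.1 (hE' h1.1) with rfl | h
        · exact Finset.mem_insert_self _ _
        rcases Finset.mem_insert.1 h with rfl | h
        · exact Finset.mem_insert_of_mem (Finset.mem_singleton_self _)
        · exact absurd (hend e h v h1.2) hv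
      have hsub2 : IsSubgraphOf S F (V'.erase v) E2 := by
        refine ⟨?_, hE2sub, ?_⟩
        · intro x hx
          have hx' := Finset.mem_erase.1 hx
          rcases Finset.mem_insert.1 (hV' hx'.2) with rfl | h
          · exact absurd rfl hx'.1
          · exact h
        · intro e he x hx
          have h1 := Finset.mem_filter.1 he
          refine Finset.mem_erase.2 ⟨?_, hcl e h1.1 x hx⟩
          rintro rfl; exact h1.2 hx
      have hsplit : (E'.filter (fun e => v ∈ e)).card + E2.card = E'.card :=
        Finset.card_filter_add_card_filter_not (fun e => v ∈ e)
      have hfilcard : (E'.filter (fun e => v ∈ e)).card ≤ 2 := by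
        calc (E'.filter (fun e => v ∈ e)).card ≤ ({s(v,u), s(v,w)} : Finset (Sym2 α)).card :=
              Finset.card_le_card hfil
          _ ≤ 2 := Finset.card_insert_le _ _ |>.trans (by simp)
      have hVcard : V'.card = (V'.erase v).card + 1 := (Finset.card_erase_add_one hvV).symm
      by_cases hE2ne : E2.Nonempty
      · have h1 := hcount _ _ hsub2 hE2ne
        omega
      · have hE2e : E2 = ∅ := Finset.not_nonempty_iff_eq_empty.1 hE2ne
        have hEsub : E' ⊆ {s(v,u), s(v,w)} := by
          intro e he
          by_cases hve : v ∈ e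
          · exact hfil (Finset.mem_filter.2 ⟨he, hve⟩)
          · have hmem : e ∈ E2 := Finset.mem_filter.2 ⟨he, hve⟩
            rw [hE2e] at hmem
            exact absurd hmem (Finset.notMem_empty e)
        have hcard2 : E'.card ≤ 2 := by
          calc E'.card ≤ ({s(v,u), s(v,w)} : Finset (Sym2 α)).card := Finset.card_le_card hEsub
            _ ≤ 2 := Finset.card_insert_le _ _ |>.trans (by simp)
        have hV2 : 2 ≤ V'.card := by
          obtain ⟨e, he⟩ := hne
          rcases Finset.mem_insert.1 (hEsub he) with rfl | h
          · have hu' : u ∈ V' := hcl _ he u (Sym2.mem_mk_right v u)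
            calc 2 = ({v, u} : Finset α).card := (Finset.card_pair hvu).symm
              _ ≤ V'.card := Finset.card_le_card (by
                  intro x hx
                  rcases Finset.mem_insert.1 hx with rfl | hx
                  · exact hvV
                  · exact Finset.mem_singleton.1 hx ▸ hu')
          · have he' : e = s(v,w) := Finset.mem_singleton.1 h
            subst he'
            have hw' : w ∈ V' := hcl _ he w (Sym2.mem_mk_right v w)
            calc 2 = ({v, w} : Finset α).card := (Finset.card_pair hvw).symm
              _ ≤ V'.card := Finset.card_le_card (by
                  intro x hx
                  rcases Finset.mem_insert.1 hx with rfl | hx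
                  · exact hvV
                  · exact Finset.mem_singleton.1 hx ▸ hw')
        rcases Nat.lt_or_ge E'.card 2 with h2 | h2
        · omega
        · have hEeq : E' = {s(v,u), s(v,w)} := by
            apply Finset.eq_of_subset_of_card_le hEsub
            calc ({s(v,u), s(v,w)} : Finset (Sym2 α)).card ≤ 2 :=
                  Finset.card_insert_le _ _ |>.trans (by simp)
              _ ≤ E'.card := h2
          have heu : s(v,u) ∈ E' := hEeq ▸ Finset.mem_insert_self _ _
          have hew : s(v,w) ∈ E' := hEeq ▸ Finset.mem_insert_of_mem (Finset.mem_singleton_self _)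
          have hu' : u ∈ V' := hcl _ heu u (Sym2.mem_mk_right v u)
          have hw' : w ∈ V' := hcl _ hew w (Sym2.mem_mk_right v w)
          have hV3 : 3 ≤ V'.card := by
            calc 3 = ({v, u, w} : Finset α).card := by
                  rw [Finset.card_insert_of_notMem (by simp [hvu, hvw]),
                      Finset.card_pair huw]
              _ ≤ V'.card := Finset.card_le_card (by
                  intro x hx
                  rcases Finset.mem_insert.1 hx with rfl | hx
                  · exact hvV
                  rcases Finset.mem_insert.1 hx with rfl | hx
                  · exact hu'
                  · exact Finset.mem_singleton.1 hx ▸ hw')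
          omega
    · have hEsub : E' ⊆ F := by
        intro e he
        rcases Finset.mem_insert.1 (hE' he) with rfl | h
        · exact absurd (hcl _ he v (Sym2.mem_mk_left v u)) hvV
        rcases Finset.mem_insert.1 h with rfl | h
        · exact absurd (hcl _ he v (Sym2.mem_mk_left v w)) hvV
        · exact h
      have hVsub : V' ⊆ S := by
        intro x hx
        rcases Finset.mem_insert.1 (hV' hx) with rfl | h
        · exact absurd hx hvV
        · exact h
      exact hcount V' E' ⟨hVsub, hEsub, hcl⟩ hne

lemma sparse_fold (l : List (α × α × α)) :
    ∀ S : Finset α, ∀ F : Finset (Sym2 α), ValidFrom S l → Sparse S F →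
    Sparse (l.foldl (fun s p => insert p.1 s) S)
      (l.foldl (fun s p => insert s(p.1, p.2.1) (insert s(p.1, p.2.2) s)) F) := by
  induction l with
  | nil => intro S F _ h; exact h
  | cons p rest ih =>
    obtain ⟨v, u, w⟩ := p
    rintro S F ⟨hv, hu, hw, huw, hval⟩ hsp
    simp only [List.foldl_cons]
    exact ih _ _ hval (sparse_step hsp hv hu hw huw)

lemma hI_sparse {V : Finset α} {E : Finset (Sym2 α)} {a b : α}
    (h : IsHennebergI V E a b) :
    ∀ V' E', IsSubgraphOf V E V' E' → E'.Nonempty → E'.card + 3 ≤ 2 * V'.card := by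
  obtain ⟨hab, l, hval, hV, hE⟩ := h
  subst hV hE
  have base : Sparse ({a, b} : Finset α) ({s(a, b)} : Finset (Sym2 α)) := by
    constructor
    · intro e he x hx
      rw [Finset.mem_singleton] at he
      subst he
      rcases Sym2.mem_iff.1 hx with rfl | rfl <;> simp
    · rintro V' E' ⟨hV', hE', hcl⟩ ⟨e, he⟩
      have he' : e = s(a, b) := Finset.mem_singleton.1 (hE' he)
      subst he'
      have ha : a ∈ V' := hcl _ he a (Sym2.mem_mk_left a b)
      have hb : b ∈ V' := hcl _ he b (Sym2.mem_mk_right a b)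
      have h2 : 2 ≤ V'.card := by
        calc 2 = ({a, b} : Finset α).card := (Finset.card_pair hab).symm
          _ ≤ V'.card := Finset.card_le_card (by
              intro x hx
              rcases Finset.mem_insert.1 hx with rfl | hx
              · exact ha
              · exact Finset.mem_singleton.1 hx ▸ hb)
      have hE1 : E'.card ≤ 1 := le_trans (Finset.card_le_card hE') (by simp)
      omega
  exact (sparse_fold l {a, b} {s(a, b)} hval base).2

/-- If `G` is a simple 1-dof Henneberg-I graph with base non-edge
`(v1, v2)`, then no wellconstrained (Laman) subgraph of `G` contains both `v1` and `v2`. -/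
theorem stmt5 (V : Finset α) (E : Finset (Sym2 α)) (v1 v2 : α)
    (hG : IsSimple1Dof V E v1 v2)
    (V' : Finset α) (E' : Finset (Sym2 α)) (hsub : IsSubgraphOf V E V' E')
    (hLaman : IsLaman V' E') :
    ¬ (v1 ∈ V' ∧ v2 ∈ V') := by
  rintro ⟨h1, h2⟩
  obtain ⟨hnotin, hHI⟩ := hG
  obtain ⟨hV'V, hE'E, hcl⟩ := hsub
  have hne12 : v1 ≠ v2 := hHI.1
  have hnotin' : s(v1, v2) ∉ E' := fun h => hnotin (hE'E h)
  have hsub2 : IsSubgraphOf V (insert s(v1, v2) E) V' (insert s(v1, v2) E') := by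
    refine ⟨hV'V, ?_, ?_⟩
    · intro e he
      rcases Finset.mem_insert.1 he with rfl | he
      · exact Finset.mem_insert_self _ _
      · exact Finset.mem_insert_of_mem (hE'E he)
    · intro e he x hx
      rcases Finset.mem_insert.1 he with rfl | he
      · rcases Sym2.mem_iff.1 hx with rfl | rfl
        · exact h1
        · exact h2
      · exact hcl e he x hx
  have hbound := hI_sparse hHI V' (insert s(v1, v2) E') hsub2 ⟨_, Finset.mem_insert_self _ _⟩
  rw [Finset.card_insert_of_notMem hnotin'] at hbound
  have := hLaman.1
  omega
end

section
/- Let G be a 1-path simple 1-dof Henneberg-I graph with base non-edge (v1, v2) such that exactly two vertices u1, u2 are constructed directly on the base pair, and both v1 and v2 have degree at least 3. Then G has a K_{3,3} minor or a C3 × C2 (triangular prism) minor. -/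
open SimpleGraph

variable {α : Type*} [DecidableEq α]

/-- The triangular prism graph `C3 × C2`: the Cartesian (box) product of a 3-cycle and
an edge. -/
def prismGraph : SimpleGraph (Fin 3 × Fin 2) := cycleGraph 3 □ completeGraph (Fin 2)

/-! Let `r` be the first vertex of the construction other than `u1` and `u2`; it exists because
`v1` has a third neighbour, and it is built on two of `v1, v2, u1, u2`. These four vertices span
an induced 4-cycle `v1 u1 v2 u2` of which `r` sees exactly its two parents. Let `Y` be the set of
all remaining vertices. A vertex of `Y` of degree at least 3 has a neighbour in `Y` constructed
after it, so from every vertex of `Y` one reaches, inside `Y`, a vertex of degree 2; by the 1-path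
property this is always the same vertex, hence `Y` is connected and `u1`, `u2`, `r` have degree at
least 3. Then `r` and every cycle vertex not adjacent to `r` have a neighbour in `Y`. Contracting
`Y` to a single vertex gives a triangular prism when the two parents of `r` are adjacent on the
cycle and `K_{3,3}` when they are opposite. -/
open Function

section Minor

variable {V W : Type*} {G : SimpleGraph V}

theorem hasMinor_of_map_and_branchSet {H : SimpleGraph W} (w₀ : W) (φ : W → V) {Y : Set V}
    (hφ : ∀ w w', w ≠ w₀ → w' ≠ w₀ → φ w = φ w' → w = w') (hφY : ∀ w, w ≠ w₀ → φ w ∉ Y)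
    (hY : (G.induce Y).Connected)
    (hadj : ∀ w w', w ≠ w₀ → w' ≠ w₀ → H.Adj w w' → G.Adj (φ w) (φ w'))
    (hadjY : ∀ w, H.Adj w w₀ → ∃ y ∈ Y, G.Adj (φ w) y) :
    HasMinor G H := by
  classical
  refine ⟨fun w => if w = w₀ then Y else {φ w}, fun w => ?_, fun w => ?_, fun w w' hne => ?_,
    fun w w' hww' => ?_⟩ <;> dsimp only
  · by_cases h : w = w₀
    · rw [if_pos h]; exact Set.nonempty_coe_sort.mp hY.nonempty
    · rw [if_neg h]; exact Set.singleton_nonempty _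
  · by_cases h : w = w₀
    · rw [if_pos h]; exact hY
    · rw [if_neg h, induce_singleton_eq_top]; exact connected_top
  · split_ifs with h h' h'
    · exact absurd (h.trans h'.symm) hne
    · exact Set.disjoint_singleton_right.mpr (hφY w' h')
    · exact Set.disjoint_singleton_left.mpr (hφY w h)
    · exact Set.disjoint_singleton.mpr fun he => hne (hφ w w' h h' he)
  · split_ifs with h h' h'
    · exact absurd (h.trans h'.symm ▸ hww') (H.loopless.irrefl _)
    · subst h
      obtain ⟨y, hy, hadj⟩ := hadjY w' hww'.symm
      exact ⟨y, hy, φ w', rfl, hadj.symm⟩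
    · subst h'
      obtain ⟨y, hy, hadj⟩ := hadjY w hww'
      exact ⟨φ w, rfl, y, hy, hadj⟩
    · exact ⟨φ w, rfl, φ w', rfl, hadj w w' h h' hww'⟩

variable {q : Fin 4 → V} {r : V} {Y : Set V}

theorem hasMinor_prismGraph_of_cycle4 (hq : Injective q) (hcyc : ∀ k, G.Adj (q k) (q (k + 1)))
    (hr : ∀ k, q k ≠ r) (hr0 : G.Adj r (q 0)) (hr1 : G.Adj r (q 1))
    (hY : (G.induce Y).Connected) (hqY : ∀ k, q k ∉ Y) (hrY : r ∉ Y)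
    (hY2 : ∃ y ∈ Y, G.Adj (q 2) y) (hY3 : ∃ y ∈ Y, G.Adj (q 3) y) (hYr : ∃ y ∈ Y, G.Adj r y) :
    HasMinor G prismGraph := by
  have h01 := hcyc 0; have h12 := hcyc 1; have h23 := hcyc 2; have h30 := hcyc 3
  -- triangles `q 0, q 1, r` and `q 3, q 2, Y`, rungs `q 0 q 3`, `q 1 q 2`, `r Y`
  refine hasMinor_of_map_and_branchSet (2, 1)
    (fun w => ![![q 0, q 3], ![q 1, q 2], ![r, r]] w.1 w.2)
    (fun w w' hw hw' h => ?_) (fun w hw => ?_) hY (fun w w' hw hw' hww' => ?_) (fun w hw => ?_)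
  · fin_cases w <;> fin_cases w' <;> simp_all [hq.eq_iff, (hr _).symm]
  · fin_cases w <;> simp_all
  · fin_cases w <;> fin_cases w' <;> simp_all [prismGraph, boxProd_adj, cycleGraph_adj] <;>
      exact G.adj_symm ‹_›
  · fin_cases w <;> simp_all [prismGraph, boxProd_adj, cycleGraph_adj]

theorem hasMinor_completeBipartiteGraph_of_cycle4 (hq : Injective q)
    (hcyc : ∀ k, G.Adj (q k) (q (k + 1))) (hr : ∀ k, q k ≠ r) (hr0 : G.Adj r (q 0))
    (hr2 : G.Adj r (q 2)) (hY : (G.induce Y).Connected) (hqY : ∀ k, q k ∉ Y) (hrY : r ∉ Y)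
    (hY1 : ∃ y ∈ Y, G.Adj (q 1) y) (hY3 : ∃ y ∈ Y, G.Adj (q 3) y) (hYr : ∃ y ∈ Y, G.Adj r y) :
    HasMinor G (completeBipartiteGraph (Fin 3) (Fin 3)) := by
  have h01 := hcyc 0; have h12 := hcyc 1; have h23 := hcyc 2; have h30 := hcyc 3
  -- sides `q 1, q 3, r` and `q 0, q 2, Y`
  refine hasMinor_of_map_and_branchSet (.inr 2) (Sum.elim ![q 1, q 3, r] ![q 0, q 2, r])
    (fun w w' hw hw' h => ?_) (fun w hw => ?_) hY (fun w w' hw hw' hww' => ?_) (fun w hw => ?_)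
  · fin_cases w <;> fin_cases w' <;> simp_all [hq.eq_iff, (hr _).symm]
  · fin_cases w <;> simp_all
  · fin_cases w <;> fin_cases w' <;> simp_all <;> exact G.adj_symm ‹_›
  · fin_cases w <;> simp_all

theorem hasMinor_of_cycle4_apex {c : Fin 4 → V} (hc : Injective c)
    (hcyc : ∀ k, G.Adj (c k) (c (k + 1))) (hr : ∀ k, c k ≠ r) {i j : Fin 4} (hij : i ≠ j)
    (hri : G.Adj r (c i)) (hrj : G.Adj r (c j)) (hY : (G.induce Y).Connected)
    (hcY : ∀ k, c k ∉ Y) (hrY : r ∉ Y) (hYc : ∀ k, k ≠ i → k ≠ j → ∃ y ∈ Y, G.Adj (c k) y)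
    (hYr : ∃ y ∈ Y, G.Adj r y) :
    HasMinor G (completeBipartiteGraph (Fin 3) (Fin 3)) ∨ HasMinor G prismGraph := by
  wlog hji : j = i + 1 ∨ j = i + 2 generalizing i j
  · have hij' : i = j + 1 := by
      have : ∀ i j : Fin 4, i ≠ j → ¬(j = i + 1 ∨ j = i + 2) → i = j + 1 := by decide
      exact this i j hij hji
    exact this hij.symm hrj hri (fun k hk hk' => hYc k hk' hk) (Or.inl hij')
  set q : Fin 4 → V := fun k => c (k + i)
  have hq : Injective q := hc.comp (add_left_injective i)
  have hqcyc : ∀ k, G.Adj (q k) (q (k + 1)) := fun k => by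
    simpa [q, add_right_comm] using hcyc (k + i)
  have hqY : ∀ k, q k ∉ Y := fun k => hcY _
  have hq0 : q 0 = c i := by simp [q]
  have hYq : ∀ k, k + i ≠ i → k + i ≠ j → ∃ y ∈ Y, G.Adj (q k) y := fun k => hYc (k + i)
  rcases hji with rfl | rfl
  · refine .inr (hasMinor_prismGraph_of_cycle4 hq hqcyc (fun k => hr _) (hq0 ▸ hri)
      (by simpa [q, add_comm] using hrj) hY hqY hrY (hYq 2 ?_ ?_) (hYq 3 ?_ ?_) hYr) <;>
      simp [add_comm _ i]
  · refine .inl (hasMinor_completeBipartiteGraph_of_cycle4 hq hqcyc (fun k => hr _) (hq0 ▸ hri)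
      (by simpa [q, add_comm] using hrj) hY hqY hrY (hYq 1 ?_ ?_) (hYq 3 ?_ ?_) hYr) <;>
      simp [add_comm _ i]

end Minor

structure IsCycle4Apex {V : Type*} (G : SimpleGraph V) (c : Fin 4 → V) (r : V) : Prop where
  injective : Injective c
  ne_apex : ∀ k, c k ≠ r
  adj_succ : ∀ k, G.Adj (c k) (c (k + 1))
  not_adj_add_two : ∀ k, ¬G.Adj (c k) (c (k + 2))
  exists_adj_apex_iff : ∃ i j, i ≠ j ∧ ∀ k, G.Adj r (c k) ↔ k = i ∨ k = j

theorem SimpleGraph.exists_reachable_induce_of_exists_adj_lt {V : Type*} {G : SimpleGraph V}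
    {Y : Set V} (hY : Y.Finite) (f : V → ℕ) {P : V → Prop}
    (h : ∀ y ∈ Y, ¬P y → ∃ z ∈ Y, G.Adj y z ∧ f y < f z) (y : Y) :
    ∃ z : Y, P z ∧ (G.induce Y).Reachable y z := by
  have : Finite Y := hY.to_subtype
  obtain ⟨z, hyz, hmax⟩ := Set.exists_max_image {z : Y | (G.induce Y).Reachable y z}
    (fun z => f z) (Set.toFinite _) ⟨y, Reachable.refl _⟩
  refine ⟨z, by_contra fun hz => ?_, hyz⟩
  obtain ⟨z', hz', hadj, hlt⟩ := h z z.2 hz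
  have hyz' : (G.induce Y).Reachable y ⟨z', hz'⟩ := hyz.trans (induce_adj.mpr hadj).reachable
  exact (hmax _ hyz').not_gt hlt

section Degree

variable {E : Finset (Sym2 α)} {x : α}

theorem two_le_degreeIn {a b : α} (hab : a ≠ b) (ha : s(x, a) ∈ E) (hb : s(x, b) ∈ E) :
    2 ≤ degreeIn E x := by
  have hsub : {s(x, a), s(x, b)} ⊆ E.filter (x ∈ ·) := by
    simp [Finset.insert_subset_iff, ha, hb]
  calc 2 = ({s(x, a), s(x, b)} : Finset _).card :=
        (Finset.card_pair fun h => hab (Sym2.congr_right.mp h)).symm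
    _ ≤ degreeIn E x := Finset.card_le_card hsub

theorem exists_mem_ne_ne_of_three_le_degreeIn (h : 3 ≤ degreeIn E x) (a b : α) :
    ∃ y, s(x, y) ∈ E ∧ y ≠ a ∧ y ≠ b := by
  obtain ⟨e, he, hne⟩ := Finset.exists_mem_notMem_of_card_lt_card
    (s := {s(x, a), s(x, b)}) (t := E.filter (x ∈ ·)) (Finset.card_le_two.trans_lt h)
  rw [Finset.mem_filter] at he
  obtain ⟨y, rfl⟩ := Sym2.mem_iff_exists.mp he.2
  refine ⟨y, he.1, ?_, ?_⟩ <;> rintro rfl <;> simp at hne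


theorem exists_adj_mem_diff_of_three_le_degreeIn {G : SimpleGraph α}
    (hG : ∀ x y, G.Adj x y ↔ s(x, y) ∈ E) {V : Finset α} (hV : ∀ y, s(x, y) ∈ E → y ∈ V)
    (h : 3 ≤ degreeIn E x) {K : Set α} {a b : α} (hK : ∀ y ∈ K, G.Adj x y → y = a ∨ y = b) :
    ∃ y ∈ (V : Set α) \ K, G.Adj x y := by
  obtain ⟨y, hy, hya, hyb⟩ := exists_mem_ne_ne_of_three_le_degreeIn h a b
  have hadj := (hG x y).mpr hy
  exact ⟨y, ⟨hV y hy, fun hyK => (hK y hyK hadj).elim hya hyb⟩, hadj⟩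

section Cycle4Apex

variable {G : SimpleGraph α} {V : Finset α} {c : Fin 4 → α} {r : α} (h : IsCycle4Apex G c r)
  (hG : ∀ x y, G.Adj x y ↔ s(x, y) ∈ E) (hV : ∀ x y, s(x, y) ∈ E → y ∈ V)
include h hG hV

theorem IsCycle4Apex.exists_adj_of_three_le_degreeIn {k : Fin 4} (hk : ¬G.Adj r (c k))
    (hdeg : 3 ≤ degreeIn E (c k)) : ∃ y ∈ (V : Set α) \ insert r (Set.range c), G.Adj (c k) y := by
  refine exists_adj_mem_diff_of_three_le_degreeIn hG (hV _) hdeg (a := c (k + 1)) (b := c (k - 1))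
    ?_
  rintro _ (rfl | ⟨m, rfl⟩) hadj
  · exact absurd hadj.symm hk
  have hm : ∀ k m : Fin 4, m = k ∨ m = k + 1 ∨ m = k + 2 ∨ m = k - 1 := by decide
  rcases hm k m with rfl | rfl | rfl | rfl
  · exact absurd rfl hadj.ne
  · exact .inl rfl
  · exact absurd hadj (h.not_adj_add_two _)
  · exact .inr rfl

theorem IsCycle4Apex.exists_adj_apex_of_three_le_degreeIn (hdeg : 3 ≤ degreeIn E r) :
    ∃ y ∈ (V : Set α) \ insert r (Set.range c), G.Adj r y := by
  obtain ⟨i, j, -, hr⟩ := h.exists_adj_apex_iff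
  refine exists_adj_mem_diff_of_three_le_degreeIn hG (hV _) hdeg (a := c i) (b := c j) ?_
  rintro _ (rfl | ⟨m, rfl⟩) hadj
  · exact absurd rfl hadj.ne
  · rcases (hr m).mp hadj with rfl | rfl
    exacts [.inl rfl, .inr rfl]

theorem IsCycle4Apex.hasMinor (hY : (G.induce ((V : Set α) \ insert r (Set.range c))).Connected)
    (hdeg : ∀ k, ¬G.Adj r (c k) → 3 ≤ degreeIn E (c k)) (hdegr : 3 ≤ degreeIn E r) :
    HasMinor G (completeBipartiteGraph (Fin 3) (Fin 3)) ∨ HasMinor G prismGraph := by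
  obtain ⟨i, j, hij, hr⟩ := h.exists_adj_apex_iff
  refine hasMinor_of_cycle4_apex h.injective h.adj_succ h.ne_apex hij ((hr i).mpr (.inl rfl))
    ((hr j).mpr (.inr rfl)) hY (fun k hk => hk.2 (.inr ⟨k, rfl⟩)) (fun hr => hr.2 (.inl rfl))
    (fun k hki hkj => ?_) (h.exists_adj_apex_of_three_le_degreeIn hG hV hdegr)
  have hk : ¬G.Adj r (c k) := fun hadj => ((hr k).mp hadj).elim hki hkj
  exact h.exists_adj_of_three_le_degreeIn hG hV hk (hdeg k hk)

end Cycle4Apex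

end Degree

section Henneberg

def BuiltOn (p : α × α × α) (x : α) : Prop := p.2.1 = x ∨ p.2.2 = x

variable {S : Finset α} {l l₁ l₂ : List (α × α × α)} {p q : α × α × α} {x : α}

theorem mem_foldl_insert_fst {T : Finset α} :
    x ∈ l.foldl (fun s p => insert p.1 s) T ↔ x ∈ T ∨ ∃ p ∈ l, p.1 = x := by
  induction l generalizing T with
  | nil => simp
  | cons p l ih => simp only [List.foldl_cons, ih, Finset.mem_insert, List.mem_cons]; grind

theorem mem_buildVerts {a b : α} : x ∈ buildVerts a b l ↔ x = a ∨ x = b ∨ ∃ p ∈ l, p.1 = x := by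
  simp [buildVerts, mem_foldl_insert_fst, or_assoc]

theorem mem_buildEdges {a b : α} {e : Sym2 α} :
    e ∈ buildEdges a b l ↔ e = s(a, b) ∨ ∃ p ∈ l, e = s(p.1, p.2.1) ∨ e = s(p.1, p.2.2) := by
  suffices ∀ T : Finset (Sym2 α),
      e ∈ l.foldl (fun s p => insert s(p.1, p.2.1) (insert s(p.1, p.2.2) s)) T ↔
        e ∈ T ∨ ∃ p ∈ l, e = s(p.1, p.2.1) ∨ e = s(p.1, p.2.2) by
    rw [buildEdges, this, Finset.mem_singleton]
  induction l with
  | nil => simp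
  | cons p l ih => intro T; simp only [List.foldl_cons, ih, Finset.mem_insert, List.mem_cons]; grind

theorem ValidFrom.append_cons (h : ValidFrom S (l₁ ++ p :: l₂)) :
    p.1 ∉ S ∧ (∀ q ∈ l₁, q.1 ≠ p.1) ∧ p.2.1 ≠ p.2.2 ∧
      ∀ x, BuiltOn p x → x ∈ S ∨ ∃ q ∈ l₁, q.1 = x := by
  induction l₁ generalizing S with
  | nil =>
    obtain ⟨v, u, w⟩ := p
    obtain ⟨hv, hu, hw, huw, -⟩ := h
    refine ⟨hv, by simp, huw, ?_⟩
    rintro x (rfl | rfl) <;> simp [*]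
  | cons q l₁ ih =>
    obtain ⟨v, u, w⟩ := q
    obtain ⟨-, -, -, -, h⟩ := h
    obtain ⟨hp, hl₁, hne, hpar⟩ := ih h
    rw [Finset.mem_insert, not_or] at hp
    refine ⟨hp.2, List.forall_mem_cons.mpr ⟨Ne.symm hp.1, hl₁⟩, hne, fun x hx => ?_⟩
    rcases hpar x hx with hx | ⟨q, hq, rfl⟩
    · rcases Finset.mem_insert.mp hx with rfl | hx
      · exact .inr ⟨_, List.mem_cons_self, rfl⟩
      · exact .inl hx
    · exact .inr ⟨q, List.mem_cons_of_mem _ hq, rfl⟩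

theorem ValidFrom.fst_notMem (h : ValidFrom S l) (hp : p ∈ l) : p.1 ∉ S := by
  obtain ⟨l₁, l₂, rfl⟩ := List.append_of_mem hp
  exact h.append_cons.1

theorem ValidFrom.eq_of_fst_eq (h : ValidFrom S l) (hp : p ∈ l) (hq : q ∈ l) (hpq : p.1 = q.1) :
    p = q := by
  obtain ⟨l₁, l₂, rfl⟩ := List.append_of_mem hp
  rcases List.mem_append.mp hq with hq | hq
  · exact absurd hpq.symm (h.append_cons.2.1 q hq)
  rcases List.mem_cons.mp hq with rfl | hq
  · rfl
  obtain ⟨m₁, m₂, rfl⟩ := List.append_of_mem hq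
  have h' : ValidFrom S ((l₁ ++ p :: m₁) ++ q :: m₂) := by simpa using h
  exact absurd hpq (h'.append_cons.2.1 p (by simp))

theorem ValidFrom.mem_or_exists_fst_eq_of_builtOn (h : ValidFrom S l) (hp : p ∈ l)
    (hx : BuiltOn p x) : x ∈ S ∨ ∃ q ∈ l, q.1 = x := by
  obtain ⟨l₁, l₂, rfl⟩ := List.append_of_mem hp
  exact (h.append_cons.2.2.2 x hx).imp_right fun ⟨q, hq, hqx⟩ => ⟨q, by simp [hq], hqx⟩

theorem ValidFrom.fst_ne_of_builtOn (h : ValidFrom S l) (hp : p ∈ l) (hx : BuiltOn p x) :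
    p.1 ≠ x := by
  obtain ⟨l₁, l₂, rfl⟩ := List.append_of_mem hp
  obtain ⟨hpS, hl₁, -, hpar⟩ := h.append_cons
  rcases hpar x hx with hxS | ⟨q, hq, rfl⟩
  · exact fun hpx => hpS (hpx ▸ hxS)
  · exact (hl₁ q hq).symm

theorem ValidFrom.idxOf_lt_of_builtOn (h : ValidFrom S l) (hp : p ∈ l) (hx : BuiltOn p x)
    (hxS : x ∉ S) : (l.map Prod.fst).idxOf x < (l.map Prod.fst).idxOf p.1 := by
  obtain ⟨l₁, l₂, rfl⟩ := List.append_of_mem hp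
  obtain ⟨-, hl₁, -, hpar⟩ := h.append_cons
  obtain ⟨q, hq, rfl⟩ := (hpar x hx).resolve_left hxS
  have hq₁ : q.1 ∈ l₁.map Prod.fst := List.mem_map_of_mem hq
  have hp₁ : p.1 ∉ l₁.map Prod.fst := fun hmem =>
    let ⟨q', hq', hq'p⟩ := List.mem_map.mp hmem
    hl₁ q' hq' hq'p
  rw [List.map_append, List.idxOf_append_of_mem hq₁, List.idxOf_append_of_notMem hp₁,
    List.map_cons, List.idxOf_cons_self]
  simpa using List.idxOf_lt_length_of_mem hq₁

def oneDofEdges (v1 v2 : α) (l : List (α × α × α)) : Finset (Sym2 α) :=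
  (buildEdges v1 v2 l).erase s(v1, v2)

def oneDofGraph (v1 v2 : α) (l : List (α × α × α)) : SimpleGraph α :=
  fromEdgeSet (oneDofEdges v1 v2 l : Set (Sym2 α))

variable {v1 v2 y : α}

theorem ValidFrom.mem_oneDofEdges_iff (hl : ValidFrom {v1, v2} l) :
    s(x, y) ∈ oneDofEdges v1 v2 l ↔ ∃ p ∈ l, (p.1 = x ∧ BuiltOn p y) ∨ (p.1 = y ∧ BuiltOn p x) := by
  rw [oneDofEdges, Finset.mem_erase, mem_buildEdges]
  constructor
  · rintro ⟨hne, hbase | ⟨p, hp, he⟩⟩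
    · exact absurd hbase hne
    · refine ⟨p, hp, ?_⟩
      simp only [BuiltOn, Sym2.eq_iff] at he ⊢
      grind
  · rintro ⟨p, hp, he⟩
    have hpv : p.1 ≠ v1 ∧ p.1 ≠ v2 := by simpa [not_or] using hl.fst_notMem hp
    refine ⟨fun hbase => ?_, .inr ⟨p, hp, ?_⟩⟩
    · simp only [Sym2.eq_iff] at hbase
      grind
    · simp only [BuiltOn, Sym2.eq_iff] at he ⊢
      grind

theorem ValidFrom.mem_oneDofEdges_of_builtOn (hl : ValidFrom {v1, v2} l) (hp : p ∈ l)
    (hx : BuiltOn p x) : s(p.1, x) ∈ oneDofEdges v1 v2 l :=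
  hl.mem_oneDofEdges_iff.mpr ⟨p, hp, .inl ⟨rfl, hx⟩⟩

theorem ValidFrom.builtOn_of_mem_oneDofEdges (hl : ValidFrom {v1, v2} l) (hp : p ∈ l)
    (he : s(p.1, y) ∈ oneDofEdges v1 v2 l) (hy : ∀ q ∈ l, q.1 = y → ¬BuiltOn q p.1) :
    BuiltOn p y := by
  obtain ⟨q, hq, ⟨hqp, hqy⟩ | ⟨hqy, hqp⟩⟩ := hl.mem_oneDofEdges_iff.mp he
  · rwa [← hl.eq_of_fst_eq hq hp hqp]
  · exact absurd hqp (hy q hq hqy)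

theorem ValidFrom.oneDofGraph_adj_iff (hl : ValidFrom {v1, v2} l) :
    (oneDofGraph v1 v2 l).Adj x y ↔ s(x, y) ∈ oneDofEdges v1 v2 l := by
  refine ⟨fun h => ((fromEdgeSet_adj _).mp h).1, fun h => (fromEdgeSet_adj _).mpr ⟨h, ?_⟩⟩
  rintro rfl
  obtain ⟨p, hp, ⟨rfl, hx⟩ | ⟨rfl, hx⟩⟩ := hl.mem_oneDofEdges_iff.mp h <;>
    exact hl.fst_ne_of_builtOn hp hx rfl

theorem ValidFrom.mem_buildVerts_of_mem_oneDofEdges (hl : ValidFrom {v1, v2} l)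
    (he : s(x, y) ∈ oneDofEdges v1 v2 l) : y ∈ buildVerts v1 v2 l := by
  obtain ⟨p, hp, ⟨-, hy⟩ | ⟨rfl, -⟩⟩ := hl.mem_oneDofEdges_iff.mp he
  · rcases hl.mem_or_exists_fst_eq_of_builtOn hp hy with hy | hy
    · rw [Finset.mem_insert, Finset.mem_singleton] at hy
      exact mem_buildVerts.mpr (or_assoc.mp (.inl hy))
    · exact mem_buildVerts.mpr (.inr (.inr hy))
  · exact mem_buildVerts.mpr (.inr (.inr ⟨p, hp, rfl⟩))

theorem ValidFrom.two_le_degreeIn_fst (hl : ValidFrom {v1, v2} l) (hp : p ∈ l) :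
    2 ≤ degreeIn (oneDofEdges v1 v2 l) p.1 := by
  obtain ⟨l₁, l₂, rfl⟩ := List.append_of_mem hp
  exact two_le_degreeIn hl.append_cons.2.2.1 (hl.mem_oneDofEdges_of_builtOn hp (.inl rfl))
    (hl.mem_oneDofEdges_of_builtOn hp (.inr rfl))

theorem ValidFrom.exists_reachable_degreeIn_eq_two (hl : ValidFrom {v1, v2} l) {K : Set α}
    (hv1 : v1 ∈ K) (hv2 : v2 ∈ K) (hK : ∀ p ∈ l, p.1 ∈ K → ∀ x, BuiltOn p x → x ∈ K)
    (y : ↥((buildVerts v1 v2 l : Set α) \ K)) :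
    ∃ z : ↥((buildVerts v1 v2 l : Set α) \ K), degreeIn (oneDofEdges v1 v2 l) z = 2 ∧
      ((oneDofGraph v1 v2 l).induce ((buildVerts v1 v2 l : Set α) \ K)).Reachable y z := by
  refine exists_reachable_induce_of_exists_adj_lt ((buildVerts v1 v2 l).finite_toSet.sdiff)
    (fun x => (l.map Prod.fst).idxOf x) (P := fun z => degreeIn (oneDofEdges v1 v2 l) z = 2)
    (fun y hy hdeg => ?_) y
  obtain ⟨hyV, hyK⟩ := hy
  obtain ⟨p, hp, rfl⟩ : ∃ p ∈ l, p.1 = y := by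
    rcases mem_buildVerts.mp hyV with rfl | rfl | h
    exacts [absurd hv1 hyK, absurd hv2 hyK, h]
  have h3 : 3 ≤ degreeIn (oneDofEdges v1 v2 l) p.1 := by
    have := hl.two_le_degreeIn_fst hp
    omega
  obtain ⟨z, hz, hz1, hz2⟩ := exists_mem_ne_ne_of_three_le_degreeIn h3 p.2.1 p.2.2
  -- a neighbour of `p.1` other than the two it is built on is built on `p.1`, hence later
  obtain ⟨q, hq, rfl, hqp⟩ : ∃ q ∈ l, q.1 = z ∧ BuiltOn q p.1 := by
    obtain ⟨q, hq, ⟨hqp, hqz | hqz⟩ | h⟩ := hl.mem_oneDofEdges_iff.mp hz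
    · exact absurd (hl.eq_of_fst_eq hq hp hqp ▸ hqz).symm hz1
    · exact absurd (hl.eq_of_fst_eq hq hp hqp ▸ hqz).symm hz2
    · exact ⟨q, hq, h⟩
  exact ⟨q.1, ⟨mem_buildVerts.mpr (.inr (.inr ⟨q, hq, rfl⟩)), fun hqK => hyK (hK q hq hqK _ hqp)⟩,
    hl.oneDofGraph_adj_iff.mpr hz, hl.idxOf_lt_of_builtOn hq hqp (hl.fst_notMem hp)⟩

theorem ValidFrom.connected_and_three_le_degreeIn (hl : ValidFrom {v1, v2} l)
    (h1p : OnePath (buildVerts v1 v2 l) (oneDofEdges v1 v2 l) v1 v2) {K : Set α}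
    (hv1 : v1 ∈ K) (hv2 : v2 ∈ K) (hK : ∀ p ∈ l, p.1 ∈ K → ∀ x, BuiltOn p x → x ∈ K)
    (hY : ((buildVerts v1 v2 l : Set α) \ K).Nonempty) :
    ((oneDofGraph v1 v2 l).induce ((buildVerts v1 v2 l : Set α) \ K)).Connected ∧
      ∀ p ∈ l, p.1 ∈ K → 3 ≤ degreeIn (oneDofEdges v1 v2 l) p.1 := by
  obtain ⟨t, -, ht⟩ := h1p
  set Y : Set α := (buildVerts v1 v2 l : Set α) \ K
  have hreach : ∀ y : Y, ∃ htY : t ∈ Y, ((oneDofGraph v1 v2 l).induce Y).Reachable y ⟨t, htY⟩ := by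
    intro y
    obtain ⟨⟨z, hzV, hzK⟩, hz, hyz⟩ := hl.exists_reachable_degreeIn_eq_two hv1 hv2 hK y
    obtain rfl := ht z ⟨hzV, fun h => hzK (h ▸ hv1), fun h => hzK (h ▸ hv2), hz⟩
    exact ⟨⟨hzV, hzK⟩, hyz⟩
  obtain ⟨y, hy⟩ := hY
  obtain ⟨htY, -⟩ := hreach ⟨y, hy⟩
  refine ⟨@Connected.mk _ _ (fun a b => ?_) ⟨⟨y, hy⟩⟩, fun p hp hpK => ?_⟩
  · obtain ⟨_, ha⟩ := hreach a
    obtain ⟨_, hb⟩ := hreach b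
    exact ha.trans hb.symm
  · have hpv : p.1 ≠ v1 ∧ p.1 ≠ v2 := by simpa [not_or] using hl.fst_notMem hp
    have hpV : p.1 ∈ buildVerts v1 v2 l := mem_buildVerts.mpr (.inr (.inr ⟨p, hp, rfl⟩))
    have h2 := hl.two_le_degreeIn_fst hp
    by_contra hlt
    obtain rfl := ht p.1 ⟨hpV, hpv.1, hpv.2, by omega⟩
    exact htY.2 hpK

theorem ValidFrom.exists_apex_step (hl : ValidFrom {v1, v2} l) {u1 u2 : α}
    (honly : ∀ p ∈ l, OnBase v1 v2 p → p.1 = u1 ∨ p.1 = u2)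
    (hd1 : 3 ≤ degreeIn (oneDofEdges v1 v2 l) v1) :
    ∃ r ∈ l, r.1 ≠ u1 ∧ r.1 ≠ u2 ∧ ¬OnBase v1 v2 r ∧
      ∀ x, BuiltOn r x → x ∈ Set.range ![v1, u1, v2, u2] := by
  have hex : ∃ p ∈ l, p.1 ≠ u1 ∧ p.1 ≠ u2 := by
    obtain ⟨w, hw, hwu1, hwu2⟩ := exists_mem_ne_ne_of_three_le_degreeIn hd1 u1 u2
    obtain ⟨p, hp, ⟨rfl, -⟩ | ⟨rfl, -⟩⟩ := hl.mem_oneDofEdges_iff.mp hw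
    · exact absurd (Finset.mem_insert_self _ _) (hl.fst_notMem hp)
    · exact ⟨p, hp, hwu1, hwu2⟩
  -- take the first such step: everything built before it is `u1` or `u2`
  obtain ⟨r, hfind⟩ := Option.isSome_iff_exists.mp
    (List.find?_isSome (p := fun p : α × α × α => decide (p.1 ≠ u1 ∧ p.1 ≠ u2)).mpr
      (by simpa using hex))
  obtain ⟨hr, l₁, l₂, rfl, hl₁⟩ := List.find?_eq_some_iff_append.mp hfind
  simp only [ne_eq, decide_eq_true_eq, Bool.not_eq_true', decide_eq_false_iff_not, not_and,
    not_not] at hr hl₁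
  obtain ⟨-, -, -, hpar⟩ := hl.append_cons
  refine ⟨r, by simp, hr.1, hr.2, fun hb => (honly r (by simp) hb).elim hr.1 hr.2, fun x hx => ?_⟩
  rcases hpar x hx with hx | ⟨q, hq, rfl⟩
  · rcases Finset.mem_insert.mp hx with rfl | hx
    exacts [⟨0, rfl⟩, ⟨2, (Finset.mem_singleton.mp hx).symm⟩]
  · by_cases hq1 : q.1 = u1
    exacts [⟨1, hq1.symm⟩, ⟨3, (hl₁ q hq hq1).symm⟩]

omit [DecidableEq α] in
theorem OnBase.builtOn (h : OnBase v1 v2 p) : BuiltOn p v1 ∧ BuiltOn p v2 := by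
  unfold OnBase at h; unfold BuiltOn; tauto

omit [DecidableEq α] in
theorem OnBase.eq_or_eq_of_builtOn (h : OnBase v1 v2 p) (hx : BuiltOn p x) : x = v1 ∨ x = v2 := by
  unfold OnBase at h; unfold BuiltOn at hx; grind

omit [DecidableEq α] in
theorem onBase_of_builtOn (hab : v1 ≠ v2) (h1 : BuiltOn p v1) (h2 : BuiltOn p v2) :
    OnBase v1 v2 p := by
  unfold BuiltOn at h1 h2; unfold OnBase; grind

section Core

variable {pu1 pu2 r : α × α × α} (hl : ValidFrom {v1, v2} l) (hpu1 : pu1 ∈ l)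
  (hpu1b : OnBase v1 v2 pu1) (hpu2 : pu2 ∈ l) (hpu2b : OnBase v1 v2 pu2)
include hl hpu1 hpu1b hpu2 hpu2b

theorem ValidFrom.eq_or_eq_of_builtOn_of_fst_mem_range (hq : q ∈ l)
    (hqc : q.1 ∈ Set.range ![v1, pu1.1, v2, pu2.1]) (hx : BuiltOn q x) : x = v1 ∨ x = v2 := by
  obtain ⟨k, hk⟩ := hqc
  fin_cases k
  · exact absurd (hk ▸ Finset.mem_insert_self _ _) (hl.fst_notMem hq)
  · exact hl.eq_of_fst_eq hpu1 hq hk ▸ hpu1b |>.eq_or_eq_of_builtOn hx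
  · exact absurd (hk ▸ by simp) (hl.fst_notMem hq)
  · exact hl.eq_of_fst_eq hpu2 hq hk ▸ hpu2b |>.eq_or_eq_of_builtOn hx

theorem ValidFrom.builtOn_of_adj (hp : p ∈ l) (hpv : p.1 ≠ v1 ∧ p.1 ≠ v2) {k : Fin 4}
    (h : (oneDofGraph v1 v2 l).Adj p.1 (![v1, pu1.1, v2, pu2.1] k)) :
    BuiltOn p (![v1, pu1.1, v2, pu2.1] k) :=
  hl.builtOn_of_mem_oneDofEdges hp (hl.oneDofGraph_adj_iff.mp h) fun _ hq hqk hqp =>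
    (hl.eq_or_eq_of_builtOn_of_fst_mem_range hpu1 hpu1b hpu2 hpu2b hq (hqk ▸ ⟨k, rfl⟩) hqp).elim
      hpv.1 hpv.2

theorem ValidFrom.isCycle4Apex (hab : v1 ≠ v2) (hu : pu1.1 ≠ pu2.1) (hr : r ∈ l)
    (hru1 : r.1 ≠ pu1.1) (hru2 : r.1 ≠ pu2.1)
    (hrc : ∀ x, BuiltOn r x → x ∈ Set.range ![v1, pu1.1, v2, pu2.1]) :
    IsCycle4Apex (oneDofGraph v1 v2 l) ![v1, pu1.1, v2, pu2.1] r.1 := by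
  have hnv : ∀ q ∈ l, q.1 ≠ v1 ∧ q.1 ≠ v2 := fun q hq => by simpa [not_or] using hl.fst_notMem hq
  obtain ⟨hu1v1, hu1v2⟩ := hnv pu1 hpu1
  obtain ⟨hu2v1, hu2v2⟩ := hnv pu2 hpu2
  have hadj {p : α × α × α} (hp : p ∈ l) {x : α} (hx : BuiltOn p x) :
      (oneDofGraph v1 v2 l).Adj p.1 x :=
    hl.oneDofGraph_adj_iff.mpr (hl.mem_oneDofEdges_of_builtOn hp hx)
  have hc : Injective ![v1, pu1.1, v2, pu2.1] := by
    intro a b h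
    fin_cases a <;> fin_cases b <;> simp_all [eq_comm]
  refine ⟨hc, fun k => ?_, fun k => ?_, fun k => ?_, ?_⟩
  · fin_cases k
    exacts [(hnv r hr).1.symm, hru1.symm, (hnv r hr).2.symm, hru2.symm]
  · fin_cases k
    exacts [(hadj hpu1 hpu1b.builtOn.1).symm, hadj hpu1 hpu1b.builtOn.2,
      (hadj hpu2 hpu2b.builtOn.2).symm, hadj hpu2 hpu2b.builtOn.1]
  · have hv : ¬(oneDofGraph v1 v2 l).Adj v1 v2 := fun h =>
      Finset.notMem_erase _ _ (hl.oneDofGraph_adj_iff.mp h)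
    have hu : ¬(oneDofGraph v1 v2 l).Adj pu1.1 pu2.1 := fun h =>
      (hpu1b.eq_or_eq_of_builtOn
        (hl.builtOn_of_adj hpu1 hpu1b hpu2 hpu2b hpu1 ⟨hu1v1, hu1v2⟩ (k := 3) h)).elim hu2v1 hu2v2
    fin_cases k
    exacts [hv, hu, fun h => hv h.symm, fun h => hu h.symm]
  · obtain ⟨i, hi⟩ := hrc r.2.1 (.inl rfl)
    obtain ⟨j, hj⟩ := hrc r.2.2 (.inr rfl)
    obtain ⟨l₁, l₂, rfl⟩ := List.append_of_mem hr
    refine ⟨i, j, fun hij => hl.append_cons.2.2.1 (by rw [← hi, ← hj, hij]),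
      fun k => ⟨fun h => ?_, ?_⟩⟩
    · rcases hl.builtOn_of_adj hpu1 hpu1b hpu2 hpu2b hr (hnv r hr) h with h | h
      exacts [.inl (hc (hi.trans h)).symm, .inr (hc (hj.trans h)).symm]
    · rintro (rfl | rfl)
      exacts [hi ▸ hadj hr (.inl rfl), hj ▸ hadj hr (.inr rfl)]

theorem ValidFrom.not_adj_or_not_adj_of_not_onBase (hab : v1 ≠ v2) (hr : r ∈ l)
    (hrb : ¬OnBase v1 v2 r) :
    ¬(oneDofGraph v1 v2 l).Adj r.1 v1 ∨ ¬(oneDofGraph v1 v2 l).Adj r.1 v2 := by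
  have hrv : r.1 ≠ v1 ∧ r.1 ≠ v2 := by simpa [not_or] using hl.fst_notMem hr
  by_contra! h
  exact hrb (onBase_of_builtOn hab (hl.builtOn_of_adj hpu1 hpu1b hpu2 hpu2b hr hrv (k := 0) h.1)
    (hl.builtOn_of_adj hpu1 hpu1b hpu2 hpu2b hr hrv (k := 2) h.2))

theorem ValidFrom.mem_insert_range_of_builtOn (hr : r ∈ l)
    (hrc : ∀ x, BuiltOn r x → x ∈ Set.range ![v1, pu1.1, v2, pu2.1]) (hp : p ∈ l)
    (hpK : p.1 ∈ insert r.1 (Set.range ![v1, pu1.1, v2, pu2.1])) (hx : BuiltOn p x) :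
    x ∈ insert r.1 (Set.range ![v1, pu1.1, v2, pu2.1]) := by
  rcases hpK with hpr | hpc
  · exact .inr (hrc x (hl.eq_of_fst_eq hp hr hpr ▸ hx))
  · rcases hl.eq_or_eq_of_builtOn_of_fst_mem_range hpu1 hpu1b hpu2 hpu2b hp hpc hx with rfl | rfl
    exacts [.inr ⟨0, rfl⟩, .inr ⟨2, rfl⟩]

end Core

end Henneberg

/-- A 1-path simple 1-dof Henneberg-I graph with exactly two vertices
`u1, u2` constructed directly on the base pair and with both base vertices of degree
at least 3 has a `K_{3,3}` minor or a `C3 × C2` (triangular prism) minor. -/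
theorem stmt10 (v1 v2 : α) (hab : v1 ≠ v2) (l : List (α × α × α))
    (hl : ValidFrom {v1, v2} l)
    (V : Finset α) (E : Finset (Sym2 α))
    (hV : V = buildVerts v1 v2 l) (hE : E = (buildEdges v1 v2 l).erase s(v1, v2))
    (h1p : OnePath V E v1 v2)
    (u1 u2 : α) (hu : u1 ≠ u2)
    (hu1 : ∃ p ∈ l, p.1 = u1 ∧ OnBase v1 v2 p)
    (hu2 : ∃ p ∈ l, p.1 = u2 ∧ OnBase v1 v2 p)
    (honly : ∀ p ∈ l, OnBase v1 v2 p → p.1 = u1 ∨ p.1 = u2)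
    (hd1 : 3 ≤ degreeIn E v1) (hd2 : 3 ≤ degreeIn E v2) :
    HasMinor (SimpleGraph.fromEdgeSet (E : Set (Sym2 α)))
      (completeBipartiteGraph (Fin 3) (Fin 3)) ∨
    HasMinor (SimpleGraph.fromEdgeSet (E : Set (Sym2 α))) prismGraph := by
  subst hV hE
  obtain ⟨pu1, hpu1, rfl, hpu1b⟩ := hu1
  obtain ⟨pu2, hpu2, rfl, hpu2b⟩ := hu2
  obtain ⟨r, hr, hru1, hru2, hrb, hrc⟩ := hl.exists_apex_step honly hd1
  have hcore := hl.isCycle4Apex hpu1 hpu1b hpu2 hpu2b hab hu hr hru1 hru2 hrc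
  have hG : ∀ x y, (oneDofGraph v1 v2 l).Adj x y ↔ s(x, y) ∈ oneDofEdges v1 v2 l :=
    fun _ _ => hl.oneDofGraph_adj_iff
  have hV : ∀ x y, s(x, y) ∈ oneDofEdges v1 v2 l → y ∈ buildVerts v1 v2 l :=
    fun _ _ => hl.mem_buildVerts_of_mem_oneDofEdges
  have hYne : ((buildVerts v1 v2 l : Set α) \
      insert r.1 (Set.range ![v1, pu1.1, v2, pu2.1])).Nonempty := by
    rcases hl.not_adj_or_not_adj_of_not_onBase hpu1 hpu1b hpu2 hpu2b hab hr hrb with h | h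
    · obtain ⟨y, hy, -⟩ := hcore.exists_adj_of_three_le_degreeIn hG hV (k := 0) h hd1
      exact ⟨y, hy⟩
    · obtain ⟨y, hy, -⟩ := hcore.exists_adj_of_three_le_degreeIn hG hV (k := 2) h hd2
      exact ⟨y, hy⟩
  obtain ⟨hYconn, hdeg⟩ := hl.connected_and_three_le_degreeIn h1p (.inr ⟨0, rfl⟩) (.inr ⟨2, rfl⟩)
    (fun _ hp hpK _ hx => hl.mem_insert_range_of_builtOn hpu1 hpu1b hpu2 hpu2b hr hrc hp hpK hx)
    hYne
  refine hcore.hasMinor hG hV hYconn (fun k _ => ?_) (hdeg r hr (.inl rfl))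
  fin_cases k
  exacts [hd1, hdeg pu1 hpu1 (.inr ⟨1, rfl⟩), hd2, hdeg pu2 hpu2 (.inr ⟨3, rfl⟩)]
end
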